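/- arXiv:2004.11315 — 2 statements merged into one kernel-verified Lean document; each statement's English description precedes it below -/
import Mathlib

section
/- If a and b are indistinguishable vertices in a graph G (i.e., their closed neighborhoods coincide: Γ[a] = Γ[b]), and a vertex x different from a and b is eliminated, then a and b are indistinguishable in the elimination graph G_x. -/
open SimpleGraph

attribute [local instance] Classical.propDecidable

variable {V : Type*} [Fintype V] [DecidableEq V]

/-- The elimination graph `G_x`: delete `x` and complete its neighborhood to a clique.
(The eliminated vertex is kept as an isolated vertex.) -/
def elimG (G : SimpleGraph V) (x : V) : SimpleGraph V where
  Adj u v := u ≠ v ∧ u ≠ x ∧ v ≠ x ∧ (G.Adj u v ∨ (G.Adj x u ∧ G.Adj x v))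
  symm := by
    constructor
    intro u v h
    obtain ⟨h1, h2, h3, h4⟩ := h
    refine ⟨h1.symm, h3, h2, ?_⟩
    rcases h4 with h | ⟨h4, h5⟩
    · exact Or.inl h.symm
    · exact Or.inr ⟨h5, h4⟩
  loopless := by constructor; intro v h; exact h.1 rfl

/-- The deficiency `D(x)`: the set of unordered pairs of distinct, non-adjacent
neighbors of `x`. -/
noncomputable def deficiencyFinset (G : SimpleGraph V) (x : V) : Finset (Sym2 V) :=
  ((Finset.univ ×ˢ Finset.univ : Finset (V × V)).filter
    (fun p => p.1 ≠ p.2 ∧ G.Adj x p.1 ∧ G.Adj x p.2 ∧ ¬ G.Adj p.1 p.2)).image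
    (fun p => s(p.1, p.2))

/-- Successive elimination of a list of vertices. -/
def elimList : SimpleGraph V → List V → SimpleGraph V
  | G, [] => G
  | G, x :: xs => elimList (elimG G x) xs

/-- The fill-in of an elimination ordering given as a list: the total number of
edges added during the elimination process. -/
noncomputable def fillList : SimpleGraph V → List V → ℕ
  | _, [] => 0
  | G, x :: xs => (deficiencyFinset G x).card + fillList (elimG G x) xs

/-- The set of fill edges added during the elimination process. -/
noncomputable def fillEdges : SimpleGraph V → List V → Finset (Sym2 V)
  | _, [] => ∅
  | G, x :: xs => deficiencyFinset G x ∪ fillEdges (elimG G x) xs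

/-- A list is an (elimination) ordering if it enumerates every vertex exactly once. -/
def IsOrdering (L : List V) : Prop := L.Nodup ∧ ∀ v : V, v ∈ L

/-- The minimum fill-in `Φ(G)`. -/
noncomputable def minFillIn (G : SimpleGraph V) : ℕ :=
  sInf {n | ∃ L : List V, IsOrdering L ∧ fillList G L = n}

/-- A vertex is simplicial if its neighborhood is a clique. -/
def IsSimplicial (G : SimpleGraph V) (x : V) : Prop :=
  ∀ a b, G.Adj x a → G.Adj x b → a ≠ b → G.Adj a b

/-- `a` and `b` are indistinguishable: equal closed neighborhoods. -/
def Indistinguishable (G : SimpleGraph V) (a b : V) : Prop :=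
  a ≠ b ∧ insert a (G.neighborSet a) = insert b (G.neighborSet b)

/-- `a` and `b` are twins: equal open neighborhoods (hence non-adjacent). -/
def Twins (G : SimpleGraph V) (a b : V) : Prop :=
  a ≠ b ∧ G.neighborSet a = G.neighborSet b

/-- Chordality: no induced cycle of length at least 4, equivalently every cycle of
length at least 4 has a chord. -/
def IsChordal (G : SimpleGraph V) : Prop :=
  ∀ n : ℕ, 4 ≤ n → ∀ f : ZMod n → V, Function.Injective f →
    ¬ (∀ i j : ZMod n, G.Adj (f i) (f j) ↔ (j = i + 1 ∨ i = j + 1))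

/-- `T` is a triangulation of `G`: a set of non-edges whose addition makes `G` chordal. -/
def IsTriangulation (G : SimpleGraph V) (T : Finset (Sym2 V)) : Prop :=
  (∀ e ∈ T, ¬ e.IsDiag ∧ e ∉ G.edgeSet) ∧
    IsChordal (G ⊔ SimpleGraph.fromEdgeSet (↑T : Set (Sym2 V)))

/-- A minimum triangulation. -/
def IsMinTriangulation (G : SimpleGraph V) (T : Finset (Sym2 V)) : Prop :=
  IsTriangulation G T ∧ ∀ T' : Finset (Sym2 V), IsTriangulation G T' → T.card ≤ T'.card

/-- The graph obtained from `G` by deleting the vertices in `S`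
(deleted vertices are kept as isolated vertices). -/
def deleteSet (G : SimpleGraph V) (S : Set V) : SimpleGraph V where
  Adj u v := G.Adj u v ∧ u ∉ S ∧ v ∉ S
  symm := ⟨fun _ _ ⟨h, hu, hv⟩ => ⟨h.symm, hv, hu⟩⟩
  loopless := ⟨fun v h => G.irrefl h.1⟩

theorem indistinguishable_iff {α : Type*} {G : SimpleGraph α} {a b : α} :
    Indistinguishable G a b ↔
      a ≠ b ∧ G.Adj a b ∧ ∀ v, v ≠ a → v ≠ b → (G.Adj a v ↔ G.Adj b v) := by
  simp only [Indistinguishable, Set.ext_iff, Set.mem_insert_iff, mem_neighborSet]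
  refine and_congr_right fun hab => ⟨fun hset => ⟨?_, fun v hva hvb => ?_⟩, ?_⟩
  · simpa [Ne.symm hab] using hset b
  · simpa [hva, hvb] using hset v
  · rintro ⟨hadj, hcommon⟩ v
    by_cases hva : v = a
    · subst hva; simp [hadj.symm]
    by_cases hvb : v = b
    · subst hvb; simp [hadj]
    simp [hva, hvb, hcommon v hva hvb]

theorem elimG_adj {α : Type*} {G : SimpleGraph α} {x u v : α} :
    (elimG G x).Adj u v ↔ u ≠ v ∧ u ≠ x ∧ v ≠ x ∧ (G.Adj u v ∨ G.Adj x u ∧ G.Adj x v) :=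
  Iff.rfl

/-- indistinguishable vertices remain indistinguishable after eliminating
any other vertex. -/
theorem stmt_3 (G : SimpleGraph V) (a b x : V) (h : Indistinguishable G a b)
    (hxa : x ≠ a) (hxb : x ≠ b) :
    Indistinguishable (elimG G x) a b := by
  rw [indistinguishable_iff] at h ⊢
  obtain ⟨hab, hadj, hcommon⟩ := h
  have hx : G.Adj x a ↔ G.Adj x b := by simpa only [adj_comm] using hcommon x hxa hxb
  refine ⟨hab, elimG_adj.2 ⟨hab, hxa.symm, hxb.symm, Or.inl hadj⟩, fun v hva hvb => ?_⟩
  simp only [elimG_adj, hcommon v hva hvb, hx, Ne.symm hva, Ne.symm hvb, Ne.symm hxa,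
    Ne.symm hxb, ne_eq, not_false_eq_true, true_and]
end

section
/- If C is a cycle graph on n ≥ 3 vertices, then every elimination ordering of C has the same fill-in, namely max(n − 3, 0); in particular every ordering of a cycle is a minimum fill-in ordering. -/
open SimpleGraph

attribute [local instance] Classical.propDecidable

variable {V : Type*} [Fintype V] [DecidableEq V]

/-!
A cycle is the graph of the cyclic permutation `c.formPerm` of a duplicate-free list `c`.
Eliminating a vertex `x` splices it out of the permutation, so the elimination graph is the cycle
on the remaining vertices; the one possible fill edge joins the two neighbours of `x`, and it is
missing from the graph exactly when the cycle has at least four vertices. By induction along the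
ordering, every ordering fills in `length c - 3` edges.
-/

open Equiv

def permGraph (σ : Perm V) : SimpleGraph V := SimpleGraph.fromRel fun u v => σ u = v

omit [Fintype V] [DecidableEq V] in
theorem permGraph_adj {σ : Perm V} {u v : V} :
    (permGraph σ).Adj u v ↔ u ≠ v ∧ (σ u = v ∨ σ v = u) :=
  SimpleGraph.fromRel_adj _ _ _

omit [Fintype V] in
/-- `swap x y * τ` is `τ` with its fixed point `x` inserted into the cycle of `y`, just before `y`. -/
theorem elimG_permGraph_swap_mul {τ : Perm V} {x : V} (hx : τ x = x) (y : V) :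
    elimG (permGraph (swap x y * τ)) x = permGraph τ := by
  ext u v
  have hinj : ∀ a b, τ a = τ b ↔ a = b := fun a b => τ.apply_eq_iff_eq
  simp only [elimG, permGraph_adj, Perm.mul_apply, swap_apply_def]
  grind

omit [Fintype V] [DecidableEq V] in
theorem elimG_permGraph_of_apply_eq_self {σ : Perm V} {x : V} (hx : σ x = x) :
    elimG (permGraph σ) x = permGraph σ := by
  simpa [swap_self, ← Perm.one_def] using elimG_permGraph_swap_mul hx x

omit [Fintype V] in
theorem elimG_permGraph_formPerm_cons {x : V} {l : List V} (hx : x ∉ l) :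
    elimG (permGraph (x :: l).formPerm) x = permGraph l.formPerm := by
  cases l with
  | nil => simpa using elimG_permGraph_of_apply_eq_self (Perm.one_apply x)
  | cons y l =>
    rw [List.formPerm_cons_cons]
    exact elimG_permGraph_swap_mul (List.formPerm_apply_of_notMem hx) y

theorem deficiencyFinset_eq_empty {G : SimpleGraph V} {x : V} (h : IsSimplicial G x) :
    deficiencyFinset G x = ∅ := by
  simp only [deficiencyFinset, Finset.image_eq_empty, Finset.filter_eq_empty_iff]
  rintro ⟨a, b⟩ - ⟨hab, ha, hb, hn⟩
  exact hn (h a b ha hb hab)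

theorem deficiencyFinset_eq_singleton {G : SimpleGraph V} {x a b : V}
    (hx : ∀ v, G.Adj x v ↔ v = a ∨ v = b) (hab : a ≠ b) (hn : ¬G.Adj a b) :
    deficiencyFinset G x = {s(a, b)} := by
  ext e
  simp only [deficiencyFinset, Finset.mem_image, Finset.mem_filter, Finset.mem_product,
    Finset.mem_univ, true_and, Finset.mem_singleton, hx]
  constructor
  · rintro ⟨⟨u, v⟩, ⟨huv, hu, hv, -⟩, rfl⟩
    rcases hu with hu | hu <;> rcases hv with hv | hv <;> simp_all [Sym2.eq_swap]
  · rintro rfl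
    exact ⟨(a, b), ⟨hab, .inl rfl, .inr rfl, hn⟩, rfl⟩

omit [Fintype V] [DecidableEq V] in
theorem isSimplicial_permGraph_of_apply_eq_self {σ : Perm V} {x : V} (hx : σ x = x) :
    IsSimplicial (permGraph σ) x := by
  intro a _ ha
  rw [permGraph_adj, hx, ← hx, σ.apply_eq_iff_eq] at ha
  grind

omit [Fintype V] in
theorem isSimplicial_permGraph_formPerm {c : List V} (hc : c.Nodup) (h3 : c.length ≤ 3) (x : V) :
    IsSimplicial (permGraph c.formPerm) x := by
  intro a b ha hb hab
  rcases c with _ | ⟨p, _ | ⟨q, _ | ⟨r, _ | ⟨_, _⟩⟩⟩⟩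
  all_goals
    simp only [permGraph_adj, List.formPerm_nil, List.formPerm_singleton, List.formPerm_cons_cons,
      Perm.one_apply, Perm.mul_apply, swap_apply_def, List.nodup_cons, List.mem_cons,
      List.length_cons] at ha hb hc h3 ⊢
    grind

theorem deficiencyFinset_permGraph_formPerm_cons {x y z w : V} {l : List V}
    (hl : (x :: y :: z :: w :: l).Nodup) :
    deficiencyFinset (permGraph (x :: y :: z :: w :: l).formPerm) x =
      {s(y, (w :: l).getLast (List.cons_ne_nil w l))} := by
  have hσy : (x :: y :: z :: w :: l).formPerm y = z := by
    have hy : y ∉ z :: w :: l := (List.nodup_cons.1 (List.nodup_cons.1 hl).2).1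
    rw [List.formPerm_cons_cons, List.formPerm_cons_cons, Perm.mul_apply, Perm.mul_apply,
      List.formPerm_apply_of_notMem hy, swap_apply_left, swap_apply_of_ne_of_ne] <;> grind
  set σ := (x :: y :: z :: w :: l).formPerm
  set last := (w :: l).getLast (List.cons_ne_nil w l)
  have hσx : σ x = y := List.formPerm_apply_head _ _ _ hl
  have hσlast : σ last = x := by
    have := List.formPerm_apply_getLast x (y :: z :: w :: l)
    rwa [List.getLast_cons_cons, List.getLast_cons_cons, List.getLast_cons_cons] at this
  have hlast : last ∈ w :: l := List.getLast_mem _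
  simp only [List.nodup_cons, List.mem_cons, not_or] at hl
  apply deficiencyFinset_eq_singleton
  · intro v
    rw [permGraph_adj, hσx, ← hσlast, σ.apply_eq_iff_eq]
    grind
  · grind
  · rw [permGraph_adj, hσy, hσlast]
    grind

theorem card_deficiencyFinset_permGraph_formPerm_cons {x : V} {l : List V}
    (hl : (x :: l).Nodup) :
    (deficiencyFinset (permGraph (x :: l).formPerm) x).card = if 3 ≤ l.length then 1 else 0 := by
  match l, hl with
  | _ :: _ :: _ :: _, hl =>
    rw [deficiencyFinset_permGraph_formPerm_cons hl, Finset.card_singleton]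
    simp
  | [], hl | [_], hl | [_, _], hl =>
    rw [deficiencyFinset_eq_empty (isSimplicial_permGraph_formPerm hl (by simp) x)]
    rfl

theorem fillList_permGraph_formPerm {c L : List V} (hc : c.Nodup) (hL : c ⊆ L) :
    fillList (permGraph c.formPerm) L = c.length - 3 := by
  induction L generalizing c with
  | nil => rw [List.subset_nil.1 hL]; rfl
  | cons x L ih =>
    by_cases hx : x ∈ c
    · obtain ⟨s, t, rfl⟩ := List.append_of_mem hx
      have hrot : s ++ x :: t ~r x :: (t ++ s) := by
        simpa using List.isRotated_append (l := s) (l' := x :: t)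
      obtain ⟨hxts, hts⟩ := List.nodup_cons.1 (hrot.nodup_iff.1 hc)
      have hts_sub : t ++ s ⊆ L := fun v hv => by
        have hvx : v ≠ x := fun h => hxts (h ▸ hv)
        simpa [hvx] using hL (hrot.mem_iff.2 (List.mem_cons_of_mem x hv))
      rw [List.formPerm_eq_of_isRotated hc hrot, fillList,
        card_deficiencyFinset_permGraph_formPerm_cons (List.nodup_cons.2 ⟨hxts, hts⟩),
        elimG_permGraph_formPerm_cons hxts, ih hts hts_sub, hrot.perm.length_eq, List.length_cons]
      split_ifs <;> omega
    · have hσx := List.formPerm_apply_of_notMem hx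
      have hc_sub : c ⊆ L := fun v hv => by
        have hvx : v ≠ x := fun h => hx (h ▸ hv)
        simpa [hvx] using hL hv
      rw [fillList, deficiencyFinset_eq_empty (isSimplicial_permGraph_of_apply_eq_self hσx),
        elimG_permGraph_of_apply_eq_self hσx, ih hc hc_sub, Finset.card_empty, zero_add]

theorem List.formPerm_finRange (n : ℕ) : (List.finRange n).formPerm = finRotate n := by
  ext u
  have := List.formPerm_apply_getElem _ (List.nodup_finRange n) u (by simp)
  simp only [List.getElem_finRange, List.length_finRange, Fin.cast_mk, Fin.eta] at this
  rw [this, finRotate_apply]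
  rcases n with _ | n
  · exact u.elim0
  · simp [Fin.val_add]

theorem cycleGraph_eq_permGraph_finRotate (n : ℕ) :
    SimpleGraph.cycleGraph n = permGraph (finRotate n) := by
  ext u v
  rw [permGraph_adj, finRotate_apply, finRotate_apply]
  match n with
  | 0 => exact u.elim0
  | 1 => simp [Subsingleton.elim u v]
  | n + 2 =>
    have hsucc : ∀ w : Fin (n + 2), w + 1 ≠ w := by simp
    rw [SimpleGraph.cycleGraph_adj, sub_eq_iff_eq_add, sub_eq_iff_eq_add]
    grind

theorem stmt_10_general (n : ℕ) :
    (∀ L : List (Fin n), IsOrdering L →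
      fillList (SimpleGraph.cycleGraph n) L = n - 3) ∧
    minFillIn (SimpleGraph.cycleGraph n) = n - 3 := by
  have hfill : ∀ L : List (Fin n), IsOrdering L →
      fillList (SimpleGraph.cycleGraph n) L = n - 3 := by
    rintro L ⟨-, hL⟩
    rw [cycleGraph_eq_permGraph_finRotate, ← List.formPerm_finRange,
      fillList_permGraph_formPerm (List.nodup_finRange n) (fun v _ => hL v), List.length_finRange]
  have hord : IsOrdering (List.finRange n) := ⟨List.nodup_finRange n, List.mem_finRange⟩
  have hfills : {k | ∃ L, IsOrdering L ∧ fillList (SimpleGraph.cycleGraph n) L = k} = {n - 3} :=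
    Set.eq_singleton_iff_unique_mem.2
      ⟨⟨_, hord, hfill _ hord⟩, fun _ ⟨L, hL, hk⟩ => hk ▸ hfill L hL⟩
  exact ⟨hfill, by rw [minFillIn, hfills, csInf_singleton]⟩

/-- every elimination ordering of a cycle on `n ≥ 3` vertices has
fill-in exactly `n - 3`; in particular every ordering is a minimum fill-in ordering. -/
theorem stmt_10 (n : ℕ) (hn : 3 ≤ n) :
    (∀ L : List (Fin n), IsOrdering L →
      fillList (SimpleGraph.cycleGraph n) L = n - 3) ∧
    minFillIn (SimpleGraph.cycleGraph n) = n - 3 :=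
  stmt_10_general n
end
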